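/- Let f: X × X → ℝ₊ have monogenic universal coarse structure E_f, and let d_ε, d_{ε'} be the graph path metrics for two values ε, ε' in the stable range. If there exist constants A, B > 0 and a controlled set E ∈ E_f with f(x,y) ≤ A·e^{−B·d_ε(x,y)} for all (x,y) ∉ E, then there exist constants A', B' > 0 and a controlled set E' ∈ E_f with f(x,y) ≤ A'·e^{−B'·d_{ε'}(x,y)} for all (x,y) ∉ E'. That is, the property of finite length does not depend on the choice of ε in the stable range. -/

import Mathlib

/-! Both ε and ε' are in the stable range, so the ε-edges form a controlled set for the coarse
structure generated by the ε'-edges. Sets of uniformly bounded `d_{ε'}`-distance form a coarse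
structure containing the ε'-edges, hence every ε-edge has `d_{ε'}`-length at most some `N`, and
following a `d_ε`-path gives `d_{ε'} ≤ N · d_ε`. The bound `A e^{-B d_ε}` therefore yields
`A e^{-(B/N) d_{ε'}}` off the same controlled set. -/

open scoped ENNReal NNReal

structure CoarseStructure (X : Type*) where
  sets : Set (Set (X × X))
  diag_mem : {p : X × X | p.1 = p.2} ∈ sets
  subset_mem : ∀ E F : Set (X × X), E ∈ sets → F ⊆ E → F ∈ sets
  union_mem : ∀ E F : Set (X × X), E ∈ sets → F ∈ sets → E ∪ F ∈ sets
  inv_mem : ∀ E : Set (X × X), E ∈ sets → {p : X × X | (p.2, p.1) ∈ E} ∈ sets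
  comp_mem : ∀ E F : Set (X × X), E ∈ sets → F ∈ sets →
    {p : X × X | ∃ y, (p.1, y) ∈ E ∧ (y, p.2) ∈ F} ∈ sets

def generatedCoarse {X : Type*} (S : Set (Set (X × X))) : Set (Set (X × X)) :=
  {E | ∀ C : CoarseStructure X, S ⊆ C.sets → E ∈ C.sets}

def univCoarse {X : Type*} (f : X → X → ℝ≥0) : Set (Set (X × X)) :=
  ⋃ (ε : ℝ≥0) (_ : 0 < ε), generatedCoarse {{p : X × X | ε ≤ f p.1 p.2}}

/-- The path (extended) metric of the graph on `X` with edge relation `R`. -/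
noncomputable def pathMetric {X : Type*} (R : X → X → Prop) (x y : X) : ℝ≥0∞ :=
  sInf {n : ℝ≥0∞ | ∃ m : ℕ, n = (m : ℝ≥0∞) ∧
    ∃ c : ℕ → X, c 0 = x ∧ c m = y ∧ ∀ i < m, R (c i) (c (i + 1))}

section PathMetric

variable {X : Type*} {R : X → X → Prop}

lemma pathMetric_le_of_chain {x y : X} {m : ℕ} {c : ℕ → X} (h0 : c 0 = x) (hm : c m = y)
    (hc : ∀ i < m, R (c i) (c (i + 1))) : pathMetric R x y ≤ m :=
  sInf_le ⟨m, rfl, c, h0, hm, hc⟩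

@[simp]
lemma pathMetric_self (x : X) : pathMetric R x x = 0 :=
  nonpos_iff_eq_zero.mp <| by
    simpa using pathMetric_le_of_chain (R := R) (m := 0) (c := fun _ => x) rfl rfl (by simp)

lemma pathMetric_le_add_one {x a b : X} (hab : R a b) :
    pathMetric R x b ≤ pathMetric R x a + 1 := by
  rw [pathMetric.eq_1 R x a, ENNReal.sInf_add]
  refine le_iInf₂ ?_
  rintro _ ⟨m, rfl, c, rfl, rfl, hc⟩
  have hchain : ∀ i < m + 1, R (Function.update c (m + 1) b i)
      (Function.update c (m + 1) b (i + 1)) := by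
    intro i hi
    rcases Nat.lt_succ_iff_lt_or_eq.mp hi with hi | rfl
    · simpa [Function.update_of_ne (show i ≠ m + 1 by omega),
        Function.update_of_ne (show i + 1 ≠ m + 1 by omega)] using hc i hi
    · simpa using hab
  exact_mod_cast pathMetric_le_of_chain (by simp) (by simp) hchain

lemma pathMetric_le_one {x y : X} (h : R x y) : pathMetric R x y ≤ 1 := by
  simpa using pathMetric_le_add_one (x := x) h

lemma le_add_mul_pathMetric {φ : X → ℝ≥0∞} {K : ℝ≥0∞} (hK₀ : K ≠ 0) (hK : K ≠ ⊤)
    (hφ : ∀ a b, R a b → φ b ≤ φ a + K) (x y : X) :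
    φ y ≤ φ x + K * pathMetric R x y := by
  have hchain : ∀ (m : ℕ) (c : ℕ → X), (∀ i < m, R (c i) (c (i + 1))) →
      φ (c m) ≤ φ (c 0) + K * m := by
    intro m c hc
    induction m with
    | zero => simp
    | succ m ih =>
      calc φ (c (m + 1)) ≤ φ (c m) + K := hφ _ _ (hc m m.lt_succ_self)
        _ ≤ φ (c 0) + K * m + K := by gcongr; exact ih fun i hi => hc i (by omega)
        _ = φ (c 0) + K * (m + 1 : ℕ) := by push_cast; ring
  simp only [pathMetric, sInf_eq_iInf, ENNReal.mul_iInf_of_ne hK₀ hK, ENNReal.add_iInf]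
  refine le_iInf₂ ?_
  rintro _ ⟨m, rfl, c, rfl, rfl, hc⟩
  exact hchain m c hc

lemma pathMetric_triangle (x y z : X) :
    pathMetric R x z ≤ pathMetric R x y + pathMetric R y z := by
  simpa using le_add_mul_pathMetric one_ne_zero ENNReal.one_ne_top
    (fun a b hab => pathMetric_le_add_one (x := x) hab) y z

lemma pathMetric_comm (hR : ∀ a b, R a b → R b a) (x y : X) : pathMetric R x y = pathMetric R y x := by
  have hle : ∀ x y, pathMetric R y x ≤ pathMetric R x y := fun x y => by
    simpa using le_add_mul_pathMetric (φ := fun b => pathMetric R b x) one_ne_zero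
      ENNReal.one_ne_top (fun a b hab => (pathMetric_triangle b a x).trans <| by
        rw [add_comm]; gcongr; exact pathMetric_le_one (hR a b hab)) x y
  exact le_antisymm (hle y x) (hle x y)

lemma pathMetric_le_mul_pathMetric {R' : X → X → Prop} {K : ℝ≥0∞} (hK₀ : K ≠ 0) (hK : K ≠ ⊤)
    (hRR' : ∀ a b, R a b → pathMetric R' a b ≤ K) (x y : X) :
    pathMetric R' x y ≤ K * pathMetric R x y := by
  simpa using le_add_mul_pathMetric (φ := pathMetric R' x) hK₀ hK
    (fun a b hab => (pathMetric_triangle x a b).trans (by gcongr; exact hRR' a b hab)) x y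

end PathMetric

def pathMetricCoarse {X : Type*} (R : X → X → Prop) (hR : ∀ a b, R a b → R b a) :
    CoarseStructure X where
  sets := {E | ∃ n : ℕ, ∀ p ∈ E, pathMetric R p.1 p.2 ≤ n}
  diag_mem := ⟨0, fun p (hp : p.1 = p.2) => by simp [hp]⟩
  subset_mem _ _ := fun ⟨n, hn⟩ hFE => ⟨n, fun p hp => hn p (hFE hp)⟩
  union_mem _ _ := fun ⟨n, hn⟩ ⟨m, hm⟩ => ⟨max n m, fun p hp => hp.elim
    (fun h => (hn p h).trans (by gcongr; exact le_max_left n m))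
    (fun h => (hm p h).trans (by gcongr; exact le_max_right n m))⟩
  inv_mem _ := fun ⟨n, hn⟩ => ⟨n, fun p hp => (pathMetric_comm hR _ _).trans_le (hn _ hp)⟩
  comp_mem _ _ := fun ⟨n, hn⟩ ⟨m, hm⟩ => ⟨n + m, fun _ ⟨y, h₁, h₂⟩ =>
    (pathMetric_triangle _ y _).trans (by push_cast; exact add_le_add (hn _ h₁) (hm _ h₂))⟩

lemma mem_generatedCoarse_of_mem {X : Type*} {S : Set (Set (X × X))} {E : Set (X × X)}
    (h : E ∈ S) : E ∈ generatedCoarse S :=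
  fun _ hC => hC h

lemma exists_pathMetric_le_of_mem_generatedCoarse {X : Type*} {R : X → X → Prop}
    (hR : ∀ a b, R a b → R b a) {S : Set (Set (X × X))} (hS : ∀ T ∈ S, ∀ p ∈ T, R p.1 p.2)
    {E : Set (X × X)} (hE : E ∈ generatedCoarse S) :
    ∃ n : ℕ, ∀ p ∈ E, pathMetric R p.1 p.2 ≤ n :=
  hE (pathMetricCoarse R hR) fun T hT =>
    ⟨1, fun p hp => by exact_mod_cast pathMetric_le_one (hS T hT p hp)⟩

lemma le_mul_exp_div_of_le_mul {d d' : ℝ≥0∞} {v A B : ℝ} {N : ℕ} (hN : 0 < N)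
    (hd : d' ≤ N * d) (h : ∀ t : ℝ, ENNReal.ofReal t ≤ d → v ≤ A * Real.exp (-B * t))
    (t : ℝ) (ht : ENNReal.ofReal t ≤ d') : v ≤ A * Real.exp (-(B / N) * t) := by
  have htN : ENNReal.ofReal (t / N) ≤ d := by
    rw [ENNReal.ofReal_div_of_pos (by positivity), ENNReal.ofReal_natCast]
    exact ENNReal.div_le_of_le_mul (by rw [mul_comm]; exact ht.trans hd)
  calc v ≤ A * Real.exp (-B * (t / N)) := h _ htN
    _ = A * Real.exp (-(B / N) * t) := by ring_nf

/-- The bound `f(x,y) ≤ A·e^{−B·d_ε(x,y)}` is encoded as `f(x,y) ≤ A·e^{−B·t}` for every real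
`t ≤ d_ε(x,y)` (so `d = ∞` forces `f(x,y) = 0`). -/
theorem finite_length_independent_of_eps_general {X : Type*} (f : X → X → ℝ≥0) (ε ε' : ℝ≥0)
    (hstable : univCoarse f = generatedCoarse {{p : X × X | ε ≤ f p.1 p.2}})
    (hstable' : univCoarse f = generatedCoarse {{p : X × X | ε' ≤ f p.1 p.2}})
    (A B : ℝ) (hA : 0 < A) (hB : 0 < B) (E : Set (X × X)) (hE : E ∈ univCoarse f)
    (hbound : ∀ x y : X, (x, y) ∉ E → ∀ t : ℝ,
      ENNReal.ofReal t ≤ pathMetric (fun a b => ε ≤ f a b ∨ ε ≤ f b a) x y →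
      (f x y : ℝ) ≤ A * Real.exp (-B * t)) :
    ∃ A' B' : ℝ, 0 < A' ∧ 0 < B' ∧ ∃ E' ∈ univCoarse f, ∀ x y : X, (x, y) ∉ E' → ∀ t : ℝ,
      ENNReal.ofReal t ≤ pathMetric (fun a b => ε' ≤ f a b ∨ ε' ≤ f b a) x y →
      (f x y : ℝ) ≤ A' * Real.exp (-B' * t) := by
  set R' : X → X → Prop := fun a b => ε' ≤ f a b ∨ ε' ≤ f b a
  have hR' : ∀ a b, R' a b → R' b a := fun _ _ => Or.symm
  obtain ⟨n, hn⟩ : ∃ n : ℕ, ∀ p ∈ {p : X × X | ε ≤ f p.1 p.2}, pathMetric R' p.1 p.2 ≤ n := by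
    refine exists_pathMetric_le_of_mem_generatedCoarse hR' (S := {{p | ε' ≤ f p.1 p.2}})
      (by rintro _ rfl p hp; exact Or.inl hp) ?_
    rw [← hstable', hstable]
    exact mem_generatedCoarse_of_mem rfl
  have hedge : ∀ a b, (ε ≤ f a b ∨ ε ≤ f b a) → pathMetric R' a b ≤ (n + 1 : ℕ) := by
    rintro a b (h | h)
    · exact (hn (a, b) h).trans (by gcongr; omega)
    · rw [pathMetric_comm hR']
      exact (hn (b, a) h).trans (by gcongr; omega)
  refine ⟨A, B / (n + 1 : ℕ), hA, by positivity, E, hE, fun x y hxy => ?_⟩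
  exact le_mul_exp_div_of_le_mul n.succ_pos
    (pathMetric_le_mul_pathMetric (by simp) (by simp) hedge x y) (hbound x y hxy)

/-- Finite length (at most exponential decay with respect to the path metric `d_ε` of the graph
`G_{f,ε}`, off a controlled set) is independent of the choice of `ε` in the stable range.
The bound `f(x,y) ≤ A·e^{−B·d_ε(x,y)}` is encoded as `f(x,y) ≤ A·e^{−B·t}` for every real
`t ≤ d_ε(x,y)` (so `d = ∞` forces `f(x,y) = 0`). -/
theorem finite_length_independent_of_eps {X : Type*} (f : X → X → ℝ≥0) (ε ε' : ℝ≥0)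
    (hε : 0 < ε) (hε' : 0 < ε')
    (hstable : univCoarse f = generatedCoarse {{p : X × X | ε ≤ f p.1 p.2}})
    (hstable' : univCoarse f = generatedCoarse {{p : X × X | ε' ≤ f p.1 p.2}})
    (A B : ℝ) (hA : 0 < A) (hB : 0 < B) (E : Set (X × X)) (hE : E ∈ univCoarse f)
    (hbound : ∀ x y : X, (x, y) ∉ E → ∀ t : ℝ,
      ENNReal.ofReal t ≤ pathMetric (fun a b => ε ≤ f a b ∨ ε ≤ f b a) x y →
      (f x y : ℝ) ≤ A * Real.exp (-B * t)) :
    ∃ A' B' : ℝ, 0 < A' ∧ 0 < B' ∧ ∃ E' ∈ univCoarse f, ∀ x y : X, (x, y) ∉ E' → ∀ t : ℝ,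
      ENNReal.ofReal t ≤ pathMetric (fun a b => ε' ≤ f a b ∨ ε' ≤ f b a) x y →
      (f x y : ℝ) ≤ A' * Real.exp (-B' * t) :=
  finite_length_independent_of_eps_general f ε ε' hstable hstable' A B hA hB E hE hbound
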